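/- arXiv:2106.05526 — 3 statements merged into one kernel-verified Lean document; each statement's English description precedes it below -/
import Mathlib

section
/- Under the uniformly-distributed condition, the one-step state distribution evolution of the hypothetical policy satisfies p_π̃(s_{t+1}=s) = Σ_{s'∈S} p_π̃(s_t=s') · C(τ, s', ·, s, t)/C(τ, s', ·, ·, t), where C counts transitions in the trajectory set τ. -/
/-! By time-homogeneity, `π̃(a|s')` equals the time-`t` frequency `C(s',a,·,t)/C(s',·,·,t)`, and
the uniformly-distributed condition gives `P(s|s',a) = C(s',a,s,t)/C(s',a,·,t)`; the factor
`C(s',a,·,t)` cancels (when it is `0`, so is `C(s',a,s,t)`), and summing over `a` yields the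
one-step evolution. -/

/-- `C τ s a s' t`: number of transitions in the trajectory set taking action `a`
in state `s` at timestep `t` and arriving at `s'` (trajectories indexed by `Fin N`). -/
def transCount {S A : Type*} [DecidableEq S] [DecidableEq A] (N : ℕ)
    (traj : Fin N → ℕ → S) (act : Fin N → ℕ → A) (s : S) (a : A) (s' : S) (t : ℕ) : ℕ :=
  (Finset.univ.filter (fun i : Fin N => traj i t = s ∧ act i t = a ∧ traj i (t + 1) = s')).card

theorem div_mul_eq_div_of_imp {K : Type*} [Field K] {n c D x : K} (hc : n = 0 → c = 0) (hx : n ≠ 0 → x = c / n) :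
    n / D * x = c / D := by
  rcases eq_or_ne n 0 with hn | hn
  · simp [hn, hc hn]
  · rw [hx hn, div_mul_div_comm, mul_comm n c, mul_div_mul_right _ _ hn]

section

variable {S A : Type*} [Fintype S] [DecidableEq S] [DecidableEq A]
  {N : ℕ} {traj : Fin N → ℕ → S} {act : Fin N → ℕ → A}

theorem transCount_eq_zero_of_sum_eq_zero {s : S} {a : A} {t : ℕ}
    (h : ∑ s'' : S, transCount N traj act s a s'' t = 0) (s' : S) :
    transCount N traj act s a s' t = 0 :=
  Finset.sum_eq_zero_iff.mp h s' (Finset.mem_univ s')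

theorem actionFreq_mul_transition_eq {P : S → S → A → ℝ}
    (huni : ∀ (s : S) (a : A) (s' : S) (t : ℕ),
      0 < ∑ s'' : S, transCount N traj act s a s'' t →
      P s' s a = (transCount N traj act s a s' t : ℝ)
                  / (∑ s'' : S, transCount N traj act s a s'' t : ℕ))
    (s' : S) (a : A) (s : S) (t : ℕ) (D : ℝ) :
    ((∑ s'' : S, transCount N traj act s' a s'' t : ℕ) : ℝ) / D * P s s' a
      = (transCount N traj act s' a s t : ℝ) / D := by
  refine div_mul_eq_div_of_imp (fun h => ?_) (fun h => huni s' a s t ?_)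
  · exact_mod_cast transCount_eq_zero_of_sum_eq_zero (by exact_mod_cast h) s
  · exact Nat.pos_of_ne_zero (by exact_mod_cast h)

end

/-- Under the uniformly-distributed condition and the time-homogeneity
identity, the one-step state-distribution evolution of the hypothetical policy
`π̃(a|s) = C(τ,s,a,·,·)/C(τ,s,·,·,·)` satisfies
`p_π̃(s_{t+1}=s) = ∑_{s'} p_π̃(s_t=s') · C(τ,s',·,s,t)/C(τ,s',·,·,t)`. -/
theorem ssrl_one_step_evolution
    {S A : Type*} [Fintype S] [Fintype A] [DecidableEq S] [DecidableEq A]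
    (N T : ℕ) (traj : Fin N → ℕ → S) (act : Fin N → ℕ → A)
    (P : S → S → A → ℝ)       -- P s' s a = P(s'|s,a)
    (p : ℕ → S → ℝ)            -- p t s = p_π̃(s_t = s)
    -- uniformly-distributed condition on transitions
    (huni : ∀ (s : S) (a : A) (s' : S) (t : ℕ),
      0 < ∑ s'' : S, transCount N traj act s a s'' t →
      P s' s a = (transCount N traj act s a s' t : ℝ)
                  / (∑ s'' : S, transCount N traj act s a s'' t : ℕ))
    -- time-homogeneity identity for the empirical action frequencies
    (hhom : ∀ (s' : S) (a : A) (t : ℕ),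
      ((∑ t' ∈ Finset.range (T + 1), ∑ s'' : S, transCount N traj act s' a s'' t' : ℕ) : ℝ)
          / ((∑ t' ∈ Finset.range (T + 1), ∑ a' : A, ∑ s'' : S,
                transCount N traj act s' a' s'' t' : ℕ) : ℝ)
        = ((∑ s'' : S, transCount N traj act s' a s'' t : ℕ) : ℝ)
          / ((∑ a' : A, ∑ s'' : S, transCount N traj act s' a' s'' t : ℕ) : ℝ))
    -- standard Markov evolution under the hypothetical policy π̃
    (hrec : ∀ (t : ℕ) (s : S), p (t + 1) s =
      ∑ s' : S, ∑ a : A, p t s'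
        * (((∑ t' ∈ Finset.range (T + 1), ∑ s'' : S, transCount N traj act s' a s'' t' : ℕ) : ℝ)
            / ((∑ t' ∈ Finset.range (T + 1), ∑ a' : A, ∑ s'' : S,
                  transCount N traj act s' a' s'' t' : ℕ) : ℝ))
        * P s s' a) :
    ∀ (t : ℕ) (s : S), p (t + 1) s =
      ∑ s' : S, p t s'
        * ((∑ a : A, transCount N traj act s' a s t : ℕ) : ℝ)
          / ((∑ a : A, ∑ s'' : S, transCount N traj act s' a s'' t : ℕ) : ℝ) := by
  intro t s
  rw [hrec]
  refine Finset.sum_congr rfl fun s' _ => ?_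
  simp only [mul_assoc, hhom s' _ t, actionFreq_mul_transition_eq huni]
  rw [← Finset.mul_sum, ← Finset.sum_div, ← Nat.cast_sum, mul_div_assoc]
end

section
/- Under the uniformly-distributed condition (including that initial state frequencies match p₀, i.e. p₀(s) = C(τ,s,·,·,0)/|τ|), the state occupancy of the hypothetical policy matches the empirical frequencies at every timestep: for all s ∈ S and all t ∈ {0,…,T}, p_π̃(s_t = s) = C(τ, s, ·, ·, t)/|τ|. -/
open Finset

section Counting

variable {S A : Type*} [DecidableEq S] [DecidableEq A] {N : ℕ}
  (traj : Fin N → ℕ → S) (act : Fin N → ℕ → A)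

theorem sum_transCount_eq_card_filter [Fintype S] (s : S) (a : A) (t : ℕ) :
    ∑ s'' : S, transCount N traj act s a s'' t =
      #{i | traj i t = s ∧ act i t = a} := by
  rw [card_eq_sum_card_fiberwise (f := fun i => traj i (t + 1)) (t := univ)
    (fun _ _ => mem_univ _)]
  simp only [transCount, filter_filter, and_assoc]

theorem sum_sum_transCount_eq_card_filter [Fintype S] [Fintype A] (s : S) (t : ℕ) :
    ∑ s' : S, ∑ a : A, transCount N traj act s' a s t = #{i | traj i (t + 1) = s} := by
  rw [card_eq_sum_card_fiberwise (f := fun i => traj i t) (t := univ) (fun _ _ => mem_univ _)]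
  refine sum_congr rfl fun s' _ => ?_
  rw [card_eq_sum_card_fiberwise (f := fun i => act i t) (t := univ) (fun _ _ => mem_univ _)]
  refine sum_congr rfl fun a _ => ?_
  simp only [transCount, filter_filter]
  congr 1
  ext i
  simp only [mem_filter]
  tauto

theorem sum_transCount_le_card_filter [Fintype S] (s : S) (a : A) (t : ℕ) :
    ∑ s'' : S, transCount N traj act s a s'' t ≤ #{i | traj i t = s} := by
  rw [sum_transCount_eq_card_filter]
  exact card_le_card (monotone_filter_right _ fun _ _ h => h.1)

theorem empirical_occupancy_mul_policy_mul_transition [Fintype S] {s' : S} {a : A} {s : S}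
    {t : ℕ} {x : ℝ} (hx : 0 < ∑ s'' : S, transCount N traj act s' a s'' t →
      x = (transCount N traj act s' a s t : ℝ)
        / (∑ s'' : S, transCount N traj act s' a s'' t : ℕ)) :
    (#{i | traj i t = s'} : ℝ) / N
        * ((∑ s'' : S, transCount N traj act s' a s'' t : ℕ) / (#{i | traj i t = s'} : ℕ)) * x
      = transCount N traj act s' a s t / N := by
  set q := transCount N traj act s' a s t
  set m := ∑ s'' : S, transCount N traj act s' a s'' t
  set c := #{i | traj i t = s'}
  have hqm : q ≤ m :=
    single_le_sum (f := (transCount N traj act s' a · t)) (fun _ _ => Nat.zero_le _) (mem_univ s)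
  rcases (Nat.zero_le m).eq_or_lt with hm | hm
  · simp [← hm, Nat.le_zero.mp (hm ▸ hqm)]
  · have hc : (c : ℝ) ≠ 0 :=
      Nat.cast_ne_zero.mpr (hm.trans_le (sum_transCount_le_card_filter traj act s' a t)).ne'
    rw [hx hm]
    field_simp

end Counting

theorem ssrl_occupancy_matches_empirical_general
    {S A : Type*} [Fintype S] [Fintype A] [DecidableEq S] [DecidableEq A]
    (N T : ℕ) (traj : Fin N → ℕ → S) (act : Fin N → ℕ → A)
    (p₀ : S → ℝ) (P : S → S → A → ℝ)   -- P s' s a = P(s'|s,a)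
    (p : ℕ → S → ℝ)                     -- occupancy of the hypothetical policy
    -- uniformly-distributed condition, initial states
    (hinit : ∀ s : S, p₀ s =
      ((Finset.univ.filter (fun i : Fin N => traj i 0 = s)).card : ℝ) / (N : ℝ))
    -- uniformly-distributed condition, transitions
    (huni : ∀ (s : S) (a : A) (s' : S) (t : ℕ),
      0 < ∑ s'' : S, transCount N traj act s a s'' t →
      P s' s a = (transCount N traj act s a s' t : ℝ)
                  / (∑ s'' : S, transCount N traj act s a s'' t : ℕ))
    -- occupancy recursion under the (time-dependent) hypothetical policy π̃
    (hp0 : ∀ s : S, p 0 s = p₀ s)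
    (hrec : ∀ (t : ℕ) (s : S), p (t + 1) s =
      ∑ s' : S, ∑ a : A, p t s'
        * (((∑ s'' : S, transCount N traj act s' a s'' t : ℕ) : ℝ)
            / (((Finset.univ.filter (fun i : Fin N => traj i t = s')).card : ℕ) : ℝ))
        * P s s' a) :
    ∀ t ≤ T, ∀ s : S,
      p t s = ((Finset.univ.filter (fun i : Fin N => traj i t = s)).card : ℝ) / (N : ℝ) := by
  suffices ∀ t s, p t s = (#{i | traj i t = s} : ℝ) / N from fun t _ => this t
  intro t
  induction t with
  | zero => intro s; rw [hp0, hinit]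
  | succ t ih =>
    intro s
    simp only [hrec t s, ih, empirical_occupancy_mul_policy_mul_transition traj act (huni _ _ s t),
      ← sum_div]
    rw [← sum_sum_transCount_eq_card_filter traj act s t]
    push_cast
    rfl

/-- Under the uniformly-distributed condition (initial frequencies match `p₀`
and empirical transition frequencies match `P`), the state occupancy of the hypothetical
policy `π̃(a|s)` at time `t` (= `C(τ,s,a,·,t)/C(τ,s,·,·,t)`) matches the empirical
frequencies at every timestep: `p_π̃(s_t = s) = C(τ,s,·,·,t)/|τ|` for all `s` and `t ≤ T`. -/
theorem ssrl_occupancy_matches_empirical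
    {S A : Type*} [Fintype S] [Fintype A] [DecidableEq S] [DecidableEq A]
    (N T : ℕ) (hN : 0 < N) (traj : Fin N → ℕ → S) (act : Fin N → ℕ → A)
    (p₀ : S → ℝ) (P : S → S → A → ℝ)   -- P s' s a = P(s'|s,a)
    (p : ℕ → S → ℝ)                     -- occupancy of the hypothetical policy
    -- uniformly-distributed condition, initial states
    (hinit : ∀ s : S, p₀ s =
      ((Finset.univ.filter (fun i : Fin N => traj i 0 = s)).card : ℝ) / (N : ℝ))
    -- uniformly-distributed condition, transitions
    (huni : ∀ (s : S) (a : A) (s' : S) (t : ℕ),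
      0 < ∑ s'' : S, transCount N traj act s a s'' t →
      P s' s a = (transCount N traj act s a s' t : ℝ)
                  / (∑ s'' : S, transCount N traj act s a s'' t : ℕ))
    -- occupancy recursion under the (time-dependent) hypothetical policy π̃
    (hp0 : ∀ s : S, p 0 s = p₀ s)
    (hrec : ∀ (t : ℕ) (s : S), p (t + 1) s =
      ∑ s' : S, ∑ a : A, p t s'
        * (((∑ s'' : S, transCount N traj act s' a s'' t : ℕ) : ℝ)
            / (((Finset.univ.filter (fun i : Fin N => traj i t = s')).card : ℕ) : ℝ))
        * P s s' a) :
    ∀ t ≤ T, ∀ s : S,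
      p t s = ((Finset.univ.filter (fun i : Fin N => traj i t = s)).card : ℝ) / (N : ℝ) :=
  ssrl_occupancy_matches_empirical_general N T traj act p₀ P p hinit huni hp0 hrec
end

section
/- Policy improvement theorem for SSRL: if the trajectories τ in the buffer satisfy the uniformly-distributed condition and their mean discounted cumulative reward is at least R(π) (i.e., trajectories improvement δ(τ) = (1/|τ|)Σ_i R(τ_i) − R(π) ≥ 0), then the hypothetical policy π̃ constructed from τ satisfies R(π̃) ≥ R(π). -/
/-!
Under the uniformly-distributed condition the occupancy of the empirical policy `π̃` is, at
every time `t`, the empirical distribution of the buffer states at time `t`: inductively,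
state frequency × action frequency × transition probability telescopes to the frequency of
the observed transition, and summing over source states and actions gives the state
frequency at `t + 1`. Hence `R(π̃)` is the mean discounted reward of the buffer
trajectories, which is at least `R(π)` by assumption.
-/

open Finset

section Counting

variable {ι S : Type*} [Fintype ι] [Fintype S] [DecidableEq S]

theorem sum_card_filter_and_eq (q : ι → Prop) [DecidablePred q] (f : ι → S) :
    ∑ s, #{i | q i ∧ f i = s} = #{i | q i} := by
  rw [card_eq_sum_card_fiberwise (f := f) (t := univ) fun _ _ => mem_univ _]
  simp only [filter_filter]

theorem sum_card_filter_mul (f : ι → S) (g : S → ℝ) :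
    ∑ s, (#{i | f i = s} : ℝ) * g s = ∑ i, g (f i) := by
  rw [← sum_fiberwise univ f fun i => g (f i)]
  refine sum_congr rfl fun s _ => ?_
  rw [sum_congr rfl fun i hi => congrArg g (mem_filter.1 hi).2, sum_const, nsmul_eq_mul]

end Counting

theorem div_mul_div_mul_eq_of_le {k m n : ℕ} {N P : ℝ} (hmk : m ≤ k) (hnm : n ≤ m)
    (hP : 0 < m → P = n / m) : k / N * (m / k) * P = n / N := by
  obtain rfl | hm := m.eq_zero_or_pos
  · simp [Nat.le_zero.1 hnm]
  have hk : (k : ℝ) ≠ 0 := by exact_mod_cast (hm.trans_le hmk).ne'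
  have hm' : (m : ℝ) ≠ 0 := by exact_mod_cast hm.ne'
  rw [hP hm]
  field_simp

section Buffer

variable {S A : Type*} [Fintype S] [DecidableEq S] [DecidableEq A]
  {N : ℕ} (traj : Fin N → ℕ → S) (act : Fin N → ℕ → A)

theorem sum_transCount_eq (s : S) (a : A) (t : ℕ) :
    ∑ s', transCount N traj act s a s' t = #{i | traj i t = s ∧ act i t = a} := by
  simp only [transCount, ← and_assoc]
  exact sum_card_filter_and_eq _ _

theorem sum_transCount_le_card (s : S) (a : A) (t : ℕ) :
    ∑ s', transCount N traj act s a s' t ≤ #{i | traj i t = s} := by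
  rw [sum_transCount_eq]
  exact card_le_card (monotone_filter_right _ fun _ _ => And.left)

theorem sum_sum_transCount_eq [Fintype A] (s : S) (t : ℕ) :
    ∑ s', ∑ a, transCount N traj act s' a s t = #{i | traj i (t + 1) = s} := by
  simp only [transCount, and_comm (a := act _ t = _), ← and_assoc]
  simp only [sum_card_filter_and_eq (fun i => _ ∧ _) (act · t)]
  simp only [and_comm (a := traj _ t = _)]
  exact sum_card_filter_and_eq _ _

theorem occupancy_eq_stateFreq [Fintype A] (P : S → S → A → ℝ) (p : ℕ → S → ℝ)
    (h0 : ∀ s, p 0 s = #{i | traj i 0 = s} / N)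
    (huni : ∀ s a s' t, 0 < ∑ s'', transCount N traj act s a s'' t →
      P s' s a = transCount N traj act s a s' t / (∑ s'', transCount N traj act s a s'' t : ℕ))
    (hrec : ∀ t s, p (t + 1) s = ∑ s', ∑ a, p t s'
      * ((∑ s'', transCount N traj act s' a s'' t : ℕ) / (#{i | traj i t = s'} : ℕ))
      * P s s' a) :
    ∀ t s, p t s = #{i | traj i t = s} / N := by
  intro t
  induction t with
  | zero => exact h0
  | succ t ih =>
    intro s
    calc p (t + 1) s = ∑ s', ∑ a, (transCount N traj act s' a s t : ℝ) / N := by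
          rw [hrec]
          refine sum_congr rfl fun s' _ => sum_congr rfl fun a _ => ?_
          rw [ih]
          exact div_mul_div_mul_eq_of_le (sum_transCount_le_card traj act s' a t)
            (single_le_sum (f := (transCount N traj act s' a · t)) (fun _ _ => Nat.zero_le _)
              (mem_univ s)) (huni s' a s t)
      _ = #{i | traj i (t + 1) = s} / N := by
          simp only [← sum_div, ← sum_sum_transCount_eq traj act s t, Nat.cast_sum]

theorem sum_weighted_stateFreq_mul (I : Finset ℕ) (w : ℕ → ℝ) (r : S → ℝ) :
    ∑ s, (∑ t ∈ I, w t * (#{i | traj i t = s} / N)) * r s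
      = 1 / N * ∑ i, ∑ t ∈ I, w t * r (traj i t) := by
  calc _ = ∑ t ∈ I, w t / N * ∑ s, (#{i | traj i t = s} : ℝ) * r s := by
        simp only [sum_mul, mul_sum]
        rw [sum_comm]
        exact sum_congr rfl fun _ _ => sum_congr rfl fun _ _ => by ring
    _ = _ := by
        simp only [sum_card_filter_mul, mul_sum]
        rw [sum_comm]
        exact sum_congr rfl fun _ _ => sum_congr rfl fun _ _ => by ring

end Buffer

theorem ssrl_policy_improvement_general
    {S A : Type*} [Fintype S] [Fintype A] [DecidableEq S] [DecidableEq A]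
    (N T : ℕ) (traj : Fin N → ℕ → S) (act : Fin N → ℕ → A)
    (p₀ : S → ℝ) (P : S → S → A → ℝ)   -- P s' s a = P(s'|s,a)
    (γ : ℝ) (r : S → ℝ)
    (Rπ : ℝ)                            -- expected discounted cumulative reward of current policy π
    (p : ℕ → S → ℝ)                     -- occupancy measure of the hypothetical policy π̃
    -- uniformly-distributed condition, initial states
    (hinit : ∀ s : S, p₀ s =
      ((Finset.univ.filter (fun i : Fin N => traj i 0 = s)).card : ℝ) / (N : ℝ))
    -- uniformly-distributed condition, transitions
    (huni : ∀ (s : S) (a : A) (s' : S) (t : ℕ),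
      0 < ∑ s'' : S, transCount N traj act s a s'' t →
      P s' s a = (transCount N traj act s a s' t : ℝ)
                  / (∑ s'' : S, transCount N traj act s a s'' t : ℕ))
    -- occupancy recursion under the hypothetical policy π̃ (empirical action frequencies)
    (hp0 : ∀ s : S, p 0 s = p₀ s)
    (hrec : ∀ (t : ℕ) (s : S), p (t + 1) s =
      ∑ s' : S, ∑ a : A, p t s'
        * (((∑ s'' : S, transCount N traj act s' a s'' t : ℕ) : ℝ)
            / (((Finset.univ.filter (fun i : Fin N => traj i t = s')).card : ℕ) : ℝ))
        * P s s' a)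
    -- trajectories improvement δ(τ) = (1/|τ|) ∑_i R(τ_i) − R(π) ≥ 0
    (hδ : (1 / (N : ℝ)) * ∑ i : Fin N, ∑ t ∈ Finset.range (T + 1), γ ^ t * r (traj i t)
            - Rπ ≥ 0) :
    -- R(π̃) = ∑_s ρ_π̃(s) r(s) ≥ R(π)
    ∑ s : S, (∑ t ∈ Finset.range (T + 1), γ ^ t * p t s) * r s ≥ Rπ := by
  have hocc := occupancy_eq_stateFreq traj act P p (fun s => (hp0 s).trans (hinit s)) huni hrec
  simp only [hocc, sum_weighted_stateFreq_mul]
  linarith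

/-- Policy-improvement theorem for SSRL. If the buffer trajectories satisfy
the uniformly-distributed condition and their mean discounted cumulative reward is at
least `R(π)` (trajectories improvement `δ(τ) ≥ 0`), then the hypothetical policy `π̃`
constructed from the buffer (via its occupancy measure) satisfies `R(π̃) ≥ R(π)`. -/
theorem ssrl_policy_improvement
    {S A : Type*} [Fintype S] [Fintype A] [DecidableEq S] [DecidableEq A]
    (N T : ℕ) (hN : 0 < N) (traj : Fin N → ℕ → S) (act : Fin N → ℕ → A)
    (p₀ : S → ℝ) (P : S → S → A → ℝ)   -- P s' s a = P(s'|s,a)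
    (γ : ℝ) (hγ : 0 < γ) (hγ1 : γ < 1) (r : S → ℝ)
    (Rπ : ℝ)                            -- expected discounted cumulative reward of current policy π
    (p : ℕ → S → ℝ)                     -- occupancy measure of the hypothetical policy π̃
    -- uniformly-distributed condition, initial states
    (hinit : ∀ s : S, p₀ s =
      ((Finset.univ.filter (fun i : Fin N => traj i 0 = s)).card : ℝ) / (N : ℝ))
    -- uniformly-distributed condition, transitions
    (huni : ∀ (s : S) (a : A) (s' : S) (t : ℕ),
      0 < ∑ s'' : S, transCount N traj act s a s'' t →
      P s' s a = (transCount N traj act s a s' t : ℝ)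
                  / (∑ s'' : S, transCount N traj act s a s'' t : ℕ))
    -- occupancy recursion under the hypothetical policy π̃ (empirical action frequencies)
    (hp0 : ∀ s : S, p 0 s = p₀ s)
    (hrec : ∀ (t : ℕ) (s : S), p (t + 1) s =
      ∑ s' : S, ∑ a : A, p t s'
        * (((∑ s'' : S, transCount N traj act s' a s'' t : ℕ) : ℝ)
            / (((Finset.univ.filter (fun i : Fin N => traj i t = s')).card : ℕ) : ℝ))
        * P s s' a)
    -- trajectories improvement δ(τ) = (1/|τ|) ∑_i R(τ_i) − R(π) ≥ 0
    (hδ : (1 / (N : ℝ)) * ∑ i : Fin N, ∑ t ∈ Finset.range (T + 1), γ ^ t * r (traj i t)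
            - Rπ ≥ 0) :
    -- R(π̃) = ∑_s ρ_π̃(s) r(s) ≥ R(π)
    ∑ s : S, (∑ t ∈ Finset.range (T + 1), γ ^ t * p t s) * r s ≥ Rπ :=
  ssrl_policy_improvement_general N T traj act p₀ P γ r Rπ p hinit huni hp0 hrec hδ
end
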